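/- arXiv:2507.15397 — 4 statements merged into one kernel-verified Lean document; each statement's English description precedes it below -/
import Mathlib

section
/- (Tweedie's formula) Let p be a probability density on ℝ^d, σ > 0, and define p_σ(z) = (2πσ²)^{-d/2} ∫_{ℝ^d} p(x) exp(-‖z - x‖²/(2σ²)) dx and the minimum mean square error denoiser MMSE_σ(z) = ( ∫_{ℝ^d} x p(x) exp(-‖z - x‖²/(2σ²)) dx ) / ( ∫_{ℝ^d} p(x) exp(-‖z - x‖²/(2σ²)) dx ). Then for every z ∈ ℝ^d, MMSE_σ(z) = z + σ² ∇ ln p_σ(z); equivalently, −∇ ln p_σ(z) = (z − MMSE_σ(z)) / σ². -/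
/-! Since `t e^{-t²/(2σ²)} ≤ σ`, the `w`-derivative of `p(x) e^{-‖w-x‖²/(2σ²)}`, namely
`σ⁻² (x - w) p(x) e^{-‖w-x‖²/(2σ²)}`, is dominated by `σ⁻¹ p(x)`, so one may differentiate
under the integral sign. The normaliser `∫ p(x) e^{-‖w-x‖²/(2σ²)} dx` is positive because `p ≥ 0`
has positive mass, and dividing the gradient by it gives `∇ ln p_σ(w) = σ⁻² (MMSE_σ(w) - w)`. -/

open MeasureTheory Real

noncomputable section

/-- `ℝ^d` as a Euclidean space. -/
abbrev Euc (d : ℕ) := EuclideanSpace ℝ (Fin d)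

/-- The Gaussian-smoothed density `p_σ(z) = (2πσ²)^{-d/2} ∫ p(x) exp(-‖z-x‖²/(2σ²)) dx`. -/
def smoothed (d : ℕ) (p : Euc d → ℝ) (σ : ℝ) (z : Euc d) : ℝ :=
  (2 * π * σ ^ 2) ^ (-(d : ℝ) / 2) *
    ∫ x : Euc d, p x * Real.exp (-‖z - x‖ ^ 2 / (2 * σ ^ 2))

/-- The minimum mean square error denoiser
`MMSE_σ(z) = (∫ x p(x) exp(-‖z-x‖²/(2σ²)) dx) / (∫ p(x) exp(-‖z-x‖²/(2σ²)) dx)`,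
i.e. the posterior mean `E[X | X + σε = z]`. -/
def mmse (d : ℕ) (p : Euc d → ℝ) (σ : ℝ) (z : Euc d) : Euc d :=
  (∫ x : Euc d, p x * Real.exp (-‖z - x‖ ^ 2 / (2 * σ ^ 2)))⁻¹ •
    ∫ x : Euc d, (p x * Real.exp (-‖z - x‖ ^ 2 / (2 * σ ^ 2))) • x

open InnerProductSpace

section Gradient

variable {E : Type*} [NormedAddCommGroup E] [InnerProductSpace ℝ E] [CompleteSpace E]
  {f : E → ℝ} {f' x : E}

theorem HasGradientAt.const_mul (hf : HasGradientAt f f' x) (c : ℝ) :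
    HasGradientAt (fun y => c * f y) (c • f') x := by
  rw [hasGradientAt_iff_hasFDerivAt, map_smul]
  exact (hasGradientAt_iff_hasFDerivAt.mp hf).const_mul c

theorem HasGradientAt.log (hf : HasGradientAt f f' x) (hx : f x ≠ 0) :
    HasGradientAt (fun y => Real.log (f y)) ((f x)⁻¹ • f') x := by
  rw [hasGradientAt_iff_hasFDerivAt, map_smul]
  exact (hasGradientAt_iff_hasFDerivAt.mp hf).log hx

end Gradient

section GaussWeight

variable {E : Type*} [NormedAddCommGroup E] {σ : ℝ}

def gaussWeight (σ : ℝ) (v : E) : ℝ := Real.exp (-‖v‖ ^ 2 / (2 * σ ^ 2))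

theorem gaussWeight_pos (v : E) : 0 < gaussWeight σ v := Real.exp_pos _

theorem gaussWeight_le_one (v : E) : gaussWeight σ v ≤ 1 := by
  rw [gaussWeight, Real.exp_le_one_iff, neg_div, neg_nonpos]
  positivity

@[fun_prop]
theorem continuous_gaussWeight : Continuous (gaussWeight (E := E) σ) := by
  unfold gaussWeight
  fun_prop

theorem norm_mul_gaussWeight_le (hσ : 0 < σ) (v : E) : ‖v‖ * gaussWeight σ v ≤ σ := by
  set t := ‖v‖
  have hlin : t ≤ σ * (t ^ 2 / (2 * σ ^ 2) + 1) := by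
    have hdiff : σ * (t ^ 2 / (2 * σ ^ 2) + 1) - t = ((t - σ) ^ 2 + σ ^ 2) / (2 * σ) := by
      field_simp
      ring
    rw [← sub_nonneg, hdiff]
    positivity
  calc t * gaussWeight σ v
      ≤ σ * Real.exp (t ^ 2 / (2 * σ ^ 2)) * gaussWeight σ v := by
        refine mul_le_mul_of_nonneg_right (hlin.trans ?_) (gaussWeight_pos v).le
        gcongr
        exact Real.add_one_le_exp _
    _ = σ := by
        rw [gaussWeight, mul_assoc, ← Real.exp_add, neg_div, add_neg_cancel, Real.exp_zero,
          mul_one]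

theorem norm_smul_mul_gaussWeight_sub_le [NormedSpace ℝ E] (hσ : 0 < σ) (a : ℝ) (z x : E) :
    ‖(a * gaussWeight σ (z - x)) • (x - z)‖ ≤ σ * ‖a‖ :=
  calc ‖(a * gaussWeight σ (z - x)) • (x - z)‖
      = ‖a‖ * (‖z - x‖ * gaussWeight σ (z - x)) := by
        rw [norm_smul, norm_mul, Real.norm_of_nonneg (gaussWeight_pos _).le, norm_sub_rev]
        ring
    _ ≤ ‖a‖ * σ := by gcongr; exact norm_mul_gaussWeight_le hσ _
    _ = σ * ‖a‖ := mul_comm _ _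

theorem hasGradientAt_gaussWeight_sub [InnerProductSpace ℝ E] [CompleteSpace E] (x w : E) :
    HasGradientAt (fun w => gaussWeight σ (w - x))
      (((σ ^ 2)⁻¹ * gaussWeight σ (w - x)) • (x - w)) w := by
  rw [hasGradientAt_iff_hasFDerivAt]
  have hsq : HasFDerivAt (fun w => ‖w - x‖ ^ 2) _ w := ((hasFDerivAt_id w).sub_const x).norm_sq
  have hfun : (fun w => gaussWeight σ (w - x)) =
      fun w => Real.exp (-(2 * σ ^ 2)⁻¹ * ‖w - x‖ ^ 2) := by
    ext w
    simp only [gaussWeight]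
    ring_nf
  rw [hfun]
  refine (hsq.const_mul _).exp.congr_fderiv ?_
  ext y
  simp [gaussWeight]
  ring_nf

end GaussWeight

section GaussianConvolution

variable {E : Type*} [NormedAddCommGroup E] [MeasurableSpace E] [OpensMeasurableSpace E]
  {μ : Measure E} {p : E → ℝ} {σ : ℝ}

theorem MeasureTheory.Integrable.mul_gaussWeight_sub (hp : Integrable p μ) (z : E) :
    Integrable (fun x => p x * gaussWeight σ (z - x)) μ :=
  hp.mul_bdd (continuous_gaussWeight.comp (continuous_sub_left z)).aestronglyMeasurable
    (ae_of_all _ fun x => by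
      rw [Real.norm_of_nonneg (gaussWeight_pos _).le]
      exact gaussWeight_le_one _)

theorem integral_mul_gaussWeight_sub_pos (hp : 0 ≤ p) (hpos : 0 < ∫ x, p x ∂μ) (z : E) :
    0 < ∫ x, p x * gaussWeight σ (z - x) ∂μ := by
  have hpi : Integrable p μ := Integrable.of_integral_ne_zero hpos.ne'
  have hsupp : Function.support (fun x => p x * gaussWeight σ (z - x)) = Function.support p := by
    ext x
    simp [(gaussWeight_pos (σ := σ) (z - x)).ne']
  rw [integral_pos_iff_support_of_nonneg (fun x => mul_nonneg (hp x) (gaussWeight_pos _).le)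
    (hpi.mul_gaussWeight_sub z), hsupp]
  exact (integral_pos_iff_support_of_nonneg hp hpi).mp hpos

theorem MeasureTheory.Integrable.mul_gaussWeight_sub_smul_sub [NormedSpace ℝ E]
    [SecondCountableTopology E] (hp : Integrable p μ) (hσ : 0 < σ) (z : E) :
    Integrable (fun x => (p x * gaussWeight σ (z - x)) • (x - z)) μ :=
  (hp.norm.const_mul σ).mono' (by fun_prop)
    (ae_of_all _ fun x => norm_smul_mul_gaussWeight_sub_le hσ (p x) z x)

theorem integral_mul_gaussWeight_sub_smul_sub [NormedSpace ℝ E] [CompleteSpace E]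
    [SecondCountableTopology E] (hp : Integrable p μ) (hσ : 0 < σ) (z : E) :
    ∫ x, (p x * gaussWeight σ (z - x)) • (x - z) ∂μ =
      ∫ x, (p x * gaussWeight σ (z - x)) • x ∂μ - (∫ x, p x * gaussWeight σ (z - x) ∂μ) • z := by
  have hcentered := hp.mul_gaussWeight_sub_smul_sub hσ z
  have hconst := (hp.mul_gaussWeight_sub (σ := σ) z).smul_const z
  have hfirst : Integrable (fun x => (p x * gaussWeight σ (z - x)) • x) μ :=
    (hcentered.add hconst).congr (ae_of_all _ fun x => by simp [smul_sub])
  simp_rw [smul_sub]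
  rw [integral_sub hfirst hconst, integral_smul_const]

theorem hasGradientAt_integral_mul_gaussWeight_sub [InnerProductSpace ℝ E] [CompleteSpace E]
    [SecondCountableTopology E] (hp : Integrable p μ) (hσ : 0 < σ) (z : E) :
    HasGradientAt (fun w => ∫ x, p x * gaussWeight σ (w - x) ∂μ)
      ((σ ^ 2)⁻¹ • ∫ x, (p x * gaussWeight σ (z - x)) • (x - z) ∂μ) z := by
  set F' : E → E → StrongDual ℝ E := fun w x =>
    toDual ℝ E ((σ ^ 2)⁻¹ • (p x * gaussWeight σ (w - x)) • (x - w))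
  have hderiv (x w : E) : HasFDerivAt (fun w => p x * gaussWeight σ (w - x)) (F' w x) w := by
    have h := hasGradientAt_iff_hasFDerivAt.mp
      ((hasGradientAt_gaussWeight_sub (σ := σ) x w).const_mul (p x))
    rwa [show p x • ((σ ^ 2)⁻¹ * gaussWeight σ (w - x)) • (x - w)
      = (σ ^ 2)⁻¹ • (p x * gaussWeight σ (w - x)) • (x - w) by module] at h
  have hbound (x w : E) : ‖F' w x‖ ≤ σ⁻¹ * ‖p x‖ :=
    calc ‖F' w x‖ = (σ ^ 2)⁻¹ * ‖(p x * gaussWeight σ (w - x)) • (x - w)‖ := by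
          rw [LinearIsometryEquiv.norm_map, norm_smul, Real.norm_of_nonneg (by positivity)]
      _ ≤ (σ ^ 2)⁻¹ * (σ * ‖p x‖) := by
          gcongr
          exact norm_smul_mul_gaussWeight_sub_le hσ (p x) w x
      _ = σ⁻¹ * ‖p x‖ := by field_simp
  have h := hasFDerivAt_integral_of_dominated_of_fderiv_le (μ := μ) Filter.univ_mem
    (Filter.Eventually.of_forall fun w => (hp.mul_gaussWeight_sub w).aestronglyMeasurable)
    (hp.mul_gaussWeight_sub z)
    ((toDual ℝ E).continuous.comp_aestronglyMeasurable
      ((hp.mul_gaussWeight_sub_smul_sub hσ z).aestronglyMeasurable.const_smul _))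
    (ae_of_all _ fun x w _ => hbound x w) (hp.norm.const_mul σ⁻¹)
    (ae_of_all _ fun x w _ => hderiv x w)
  rw [hasGradientAt_iff_hasFDerivAt, ← integral_smul]
  exact h.congr_fderiv ((toDual ℝ E).toLinearIsometry.integral_comp_comm _)

end GaussianConvolution

theorem gradient_log_smoothed (d : ℕ) (p : Euc d → ℝ) (hnonneg : ∀ x, 0 ≤ p x)
    (hint : (∫ x : Euc d, p x) = 1) (σ : ℝ) (hσ : 0 < σ) (z : Euc d) :
    gradient (fun w => Real.log (smoothed d p σ w)) z = (σ ^ 2)⁻¹ • (mmse d p σ z - z) := by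
  have hp : Integrable p := integrable_of_integral_eq_one hint
  set C : ℝ := (2 * π * σ ^ 2) ^ (-(d : ℝ) / 2)
  set F : Euc d → ℝ := fun w => ∫ x, p x * gaussWeight σ (w - x)
  have hC : 0 < C := by positivity
  have hF : 0 < F z := integral_mul_gaussWeight_sub_pos hnonneg (by rw [hint]; exact one_pos) z
  have hgrad := ((hasGradientAt_integral_mul_gaussWeight_sub hp hσ z).const_mul C).log
    (mul_pos hC hF).ne'
  refine hgrad.gradient.trans ?_
  rw [integral_mul_gaussWeight_sub_smul_sub hp hσ z]
  set M : Euc d := ∫ x, (p x * gaussWeight σ (z - x)) • x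
  change (C * F z)⁻¹ • C • (σ ^ 2)⁻¹ • (M - F z • z) = (σ ^ 2)⁻¹ • ((F z)⁻¹ • M - z)
  match_scalars <;> field_simp

theorem tweedie_formula_general
    (d : ℕ) (p : Euc d → ℝ)
    (hnonneg : ∀ x, 0 ≤ p x)
    (hint : (∫ x : Euc d, p x) = 1)
    (σ : ℝ) (hσ : 0 < σ) :
    ∀ z : Euc d,
      mmse d p σ z = z + (σ ^ 2) • gradient (fun w => Real.log (smoothed d p σ w)) z ∧
      -gradient (fun w => Real.log (smoothed d p σ w)) z = (σ ^ 2)⁻¹ • (z - mmse d p σ z) := by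
  intro z
  rw [gradient_log_smoothed d p hnonneg hint σ hσ z, smul_inv_smul₀ (by positivity), ← smul_neg,
    neg_sub]
  exact ⟨by abel, rfl⟩

/-- **Tweedie's formula**: `MMSE_σ(z) = z + σ² ∇ ln p_σ(z)`, equivalently
`-∇ ln p_σ(z) = (z - MMSE_σ(z))/σ²`. -/
theorem tweedie_formula
    (d : ℕ) (p : Euc d → ℝ)
    (hmeas : Measurable p) (hnonneg : ∀ x, 0 ≤ p x)
    (hint : (∫ x : Euc d, p x) = 1)
    (σ : ℝ) (hσ : 0 < σ) :
    ∀ z : Euc d,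
      mmse d p σ z = z + (σ ^ 2) • gradient (fun w => Real.log (smoothed d p σ w)) z ∧
      -gradient (fun w => Real.log (smoothed d p σ w)) z = (σ ^ 2)⁻¹ • (z - mmse d p σ z) :=
  tweedie_formula_general d p hnonneg hint σ hσ

end
end

section
/- (Second-order Tweedie identity) Let p be a probability density on ℝ^d and σ > 0. Define p_σ(z) = (2πσ²)^{-d/2} ∫_{ℝ^d} p(x) exp(-‖z - x‖²/(2σ²)) dx, the posterior first moment m_σ(z) = ( ∫ (z - x) p(x) exp(-‖z - x‖²/(2σ²)) dx ) / ( ∫ p(x) exp(-‖z - x‖²/(2σ²)) dx ) ∈ ℝ^d, and the posterior covariance matrix C_σ(z) = ( ∫ (z - x)(z - x)^T p(x) exp(-‖z - x‖²/(2σ²)) dx ) / ( ∫ p(x) exp(-‖z - x‖²/(2σ²)) dx ) − m_σ(z) m_σ(z)^T. Then for every z ∈ ℝ^d, −∇² ln p_σ(z) = (1/σ²) ( I_d − (1/σ²) C_σ(z) ); in particular, since C_σ(z) is positive semidefinite, −∇² ln p_σ(z) ⪯ (1/σ²) I_d. -/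
open MeasureTheory Real

noncomputable section

/-- The Hessian matrix of `f` at `z`, with entries the second partial derivatives along the
standard basis directions. -/
def hessMat (d : ℕ) (f : Euc d → ℝ) (z : Euc d) : Matrix (Fin d) (Fin d) ℝ :=
  Matrix.of fun i j =>
    fderiv ℝ (fun y => fderiv ℝ f y (EuclideanSpace.single j 1)) z (EuclideanSpace.single i 1)

/-- The posterior first moment
`m_σ(z) = (∫ (z-x) p(x) exp(-‖z-x‖²/(2σ²)) dx) / (∫ p(x) exp(-‖z-x‖²/(2σ²)) dx)`. -/
def postMean (d : ℕ) (p : Euc d → ℝ) (σ : ℝ) (z : Euc d) : Euc d :=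
  (∫ x : Euc d, p x * Real.exp (-‖z - x‖ ^ 2 / (2 * σ ^ 2)))⁻¹ •
    ∫ x : Euc d, (p x * Real.exp (-‖z - x‖ ^ 2 / (2 * σ ^ 2))) • (z - x)

/-- The posterior covariance matrix
`C_σ(z) = (∫ (z-x)(z-x)ᵀ p(x) e^{-‖z-x‖²/(2σ²)} dx)/(∫ p(x) e^{-‖z-x‖²/(2σ²)} dx) − m_σ(z) m_σ(z)ᵀ`. -/
def postCov (d : ℕ) (p : Euc d → ℝ) (σ : ℝ) (z : Euc d) : Matrix (Fin d) (Fin d) ℝ :=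
  Matrix.of fun i j =>
    (∫ x : Euc d, p x * Real.exp (-‖z - x‖ ^ 2 / (2 * σ ^ 2)))⁻¹ *
      (∫ x : Euc d, (p x * Real.exp (-‖z - x‖ ^ 2 / (2 * σ ^ 2))) * ((z - x) i * (z - x) j))
      - postMean d p σ z i * postMean d p σ z j

/-
Write `p_σ = c · Z` with `Z(z) = ∫ p(x) K(z - x) dx` for the Gaussian kernel
`K(v) = exp(-‖v‖²/(2σ²))`. Since `K`, `v ↦ K(v) v` and their derivatives are bounded, one may
differentiate under the integral sign: `∇Z = -σ⁻² M₁` and `DM₁ = Z · I - σ⁻² M₂`, where `M₁`, `M₂`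
are the unnormalised first and second moments of `z - x` under the posterior `p(x) K(z - x)`.
Hence `∇ ln p_σ = -σ⁻² m` with `m = M₁ / Z` (first-order Tweedie), and the quotient rule gives
`Dm = I - σ⁻² C`, which is the Hessian identity. `C` is positive semidefinite because
`⟪C v, v⟫` is the posterior variance of `⟪z - x, v⟫` (weighted Cauchy–Schwarz).
-/

open InnerProductSpace RealInnerProductSpace

section GaussKernel

variable {E : Type*} [NormedAddCommGroup E] {σ : ℝ}

def gaussKernel (σ : ℝ) (v : E) : ℝ := exp (-‖v‖ ^ 2 / (2 * σ ^ 2))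

theorem gaussKernel_pos (v : E) : 0 < gaussKernel σ v := exp_pos _

theorem gaussKernel_le_one (v : E) : gaussKernel σ v ≤ 1 :=
  exp_le_one_iff.2 (div_nonpos_of_nonpos_of_nonneg (by simp) (by positivity))

theorem sq_norm_mul_gaussKernel_le (hσ : σ ≠ 0) (v : E) :
    ‖v‖ ^ 2 * gaussKernel σ v ≤ 2 * σ ^ 2 := by
  have hσ2 : 0 < 2 * σ ^ 2 := by positivity
  have hexp := add_one_le_exp (‖v‖ ^ 2 / (2 * σ ^ 2))
  rw [gaussKernel, neg_div, exp_neg, ← div_eq_mul_inv, div_le_iff₀ (exp_pos _)]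
  rw [div_add_one hσ2.ne', div_le_iff₀ hσ2] at hexp
  nlinarith

theorem norm_mul_gaussKernel_le (hσ : σ ≠ 0) (v : E) :
    ‖v‖ * gaussKernel σ v ≤ 1 + 2 * σ ^ 2 := by
  nlinarith [sq_norm_mul_gaussKernel_le hσ v, gaussKernel_le_one (σ := σ) v,
    gaussKernel_pos (σ := σ) v, sq_nonneg (‖v‖ - 1)]

theorem norm_gaussKernel_le_one (v : E) : ‖gaussKernel σ v‖ ≤ 1 := by
  rw [norm_of_nonneg (gaussKernel_pos v).le]
  exact gaussKernel_le_one v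

variable [InnerProductSpace ℝ E]

theorem contDiff_gaussKernel : ContDiff ℝ 1 (gaussKernel (E := E) σ) :=
  ((contDiff_norm_sq ℝ).neg.div_const _).exp

theorem hasFDerivAt_gaussKernel (v : E) :
    HasFDerivAt (gaussKernel σ) (-(σ ^ 2)⁻¹ • innerSL ℝ (gaussKernel σ v • v)) v := by
  have h : HasFDerivAt (fun w : E => ‖w‖ ^ 2) (2 • innerSL ℝ v) v := by
    simpa using (hasFDerivAt_id v).norm_sq
  convert HasFDerivAt.exp (HasFDerivAt.mul_const (HasFDerivAt.neg h) (2 * σ ^ 2)⁻¹) using 1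
  · ext w
    simp [gaussKernel, div_eq_mul_inv]
  · ext w
    simp only [gaussKernel, div_eq_mul_inv, mul_inv_rev, neg_mul, map_smul, neg_smul, neg_apply,
      smul_apply, coe_innerSL_apply, smul_eq_mul, Pi.neg_apply, smul_neg, nsmul_eq_mul,
      Nat.cast_ofNat, neg_inj]
    ring

theorem hasFDerivAt_gaussKernel_smul (v : E) :
    HasFDerivAt (fun w => gaussKernel σ w • w)
      (gaussKernel σ v • (1 - (σ ^ 2)⁻¹ • rankOne ℝ v v : E →L[ℝ] E)) v := by
  refine ((hasFDerivAt_gaussKernel v).smul (hasFDerivAt_id v)).congr_fderiv ?_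
  ext w
  simp only [map_smul, smul_smul, neg_mul, neg_smul, id_eq, add_apply, smul_apply,
    ContinuousLinearMap.id_apply, ContinuousLinearMap.smulRight_apply, neg_apply,
    coe_innerSL_apply, smul_eq_mul, smul_sub, sub_apply, one_apply_eq_self, rankOne_apply]
  module

theorem norm_gaussKernel_smul_le (hσ : σ ≠ 0) (v : E) :
    ‖gaussKernel σ v • v‖ ≤ 1 + 2 * σ ^ 2 := by
  rw [norm_smul, norm_of_nonneg (gaussKernel_pos v).le, mul_comm]
  exact norm_mul_gaussKernel_le hσ v

theorem norm_gaussKernel_smul_rankOne_le (hσ : σ ≠ 0) (v : E) :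
    ‖gaussKernel σ v • rankOne ℝ v v‖ ≤ 2 * σ ^ 2 := by
  rw [norm_smul, norm_of_nonneg (gaussKernel_pos v).le, norm_rankOne, ← sq, mul_comm]
  exact sq_norm_mul_gaussKernel_le hσ v

theorem continuous_rankOne_self : Continuous fun v : E => rankOne ℝ v v := by
  simp_rw [rankOne_def]
  fun_prop

end GaussKernel

section CauchySchwarz

variable {α : Type*} [MeasurableSpace α] {μ : Measure α} {w q : α → ℝ}

theorem sq_integral_mul_le (hw : ∀ x, 0 ≤ w x) (hw_int : Integrable w μ)
    (hwq : Integrable (fun x => w x * q x) μ) (hwq2 : Integrable (fun x => w x * q x ^ 2) μ) :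
    (∫ x, w x * q x ∂μ) ^ 2 ≤ (∫ x, w x ∂μ) * ∫ x, w x * q x ^ 2 ∂μ := by
  have hquad : ∀ t : ℝ, 0 ≤ (∫ x, w x ∂μ) * (t * t) + (-2 * ∫ x, w x * q x ∂μ) * t +
      ∫ x, w x * q x ^ 2 ∂μ := by
    intro t
    have hexpand : (fun x => w x * (t - q x) ^ 2) =
        fun x => t * t * w x + (-2 * t * (w x * q x) + w x * q x ^ 2) := by
      funext x
      ring
    have h : 0 ≤ ∫ x, w x * (t - q x) ^ 2 ∂μ :=
      integral_nonneg fun x => mul_nonneg (hw x) (sq_nonneg (t - q x))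
    have hrest : Integrable (fun x => -2 * t * (w x * q x) + w x * q x ^ 2) μ :=
      (hwq.const_mul _).add hwq2
    rw [hexpand, integral_add (hw_int.const_mul _) hrest, integral_add (hwq.const_mul _) hwq2,
      integral_const_mul, integral_const_mul] at h
    linarith
  have h := discrim_le_zero hquad
  rw [discrim] at h
  linarith

end CauchySchwarz

section Convolution

variable {E F : Type*} [NormedAddCommGroup E] [SecondCountableTopology E]
  [MeasurableSpace E] [BorelSpace E] [NormedAddCommGroup F] [NormedSpace ℝ F]
  {μ : Measure E} {p : E → ℝ}

theorem MeasureTheory.Integrable.smul_comp_sub {ψ : E → F} (hp : Integrable p μ)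
    (hψ : Continuous ψ) {C : ℝ} (hψC : ∀ v, ‖ψ v‖ ≤ C) (z : E) :
    Integrable (fun x => p x • ψ (z - x)) μ :=
  hp.smul_bdd C (by fun_prop) (.of_forall fun x => hψC (z - x))

theorem hasFDerivAt_integral_smul_comp_sub [NormedSpace ℝ E] [CompleteSpace F] {φ : E → F}
    (hp : Integrable p μ) (hφ : ContDiff ℝ 1 φ) {C₀ C₁ : ℝ} (hφC₀ : ∀ v, ‖φ v‖ ≤ C₀)
    (hφC₁ : ∀ v, ‖fderiv ℝ φ v‖ ≤ C₁) (z : E) :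
    HasFDerivAt (fun y => ∫ x, p x • φ (y - x) ∂μ) (∫ x, p x • fderiv ℝ φ (z - x) ∂μ) z := by
  have hφ_cont : Continuous (fderiv ℝ φ) := hφ.continuous_fderiv one_ne_zero
  refine hasFDerivAt_integral_of_dominated_of_fderiv_le
    (F' := fun y x => p x • fderiv ℝ φ (y - x)) (bound := fun x => ‖p x‖ * C₁)
    Filter.univ_mem (.of_forall fun y => (hp.smul_comp_sub hφ.continuous hφC₀ y).1)
    (hp.smul_comp_sub hφ.continuous hφC₀ z)
    (hp.1.smul (hφ_cont.comp (continuous_sub_left z)).aestronglyMeasurable)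
    (.of_forall fun x y _ => ?_) (hp.norm.mul_const C₁) (.of_forall fun x y _ => ?_)
  · rw [norm_smul]
    exact mul_le_mul_of_nonneg_left (hφC₁ _) (norm_nonneg _)
  · have hsub : HasFDerivAt (fun y : E => y - x) (ContinuousLinearMap.id ℝ E) y :=
      (hasFDerivAt_id y).sub_const x
    exact (((hφ.differentiable one_ne_zero (y - x)).hasFDerivAt.comp y hsub).const_smul (p x) :)

end Convolution

section Posterior

variable {E : Type*} [NormedAddCommGroup E] [InnerProductSpace ℝ E]
  [SecondCountableTopology E] [MeasurableSpace E] [BorelSpace E] {μ : Measure E} {p : E → ℝ}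
  {σ : ℝ}

-- Unnormalised moments of the noise `z - x` under the posterior `p(x) K(z - x) μ(dx)`.
def posteriorMass (μ : Measure E) (p : E → ℝ) (σ : ℝ) (z : E) : ℝ :=
  ∫ x, p x * gaussKernel σ (z - x) ∂μ

def posteriorMoment (μ : Measure E) (p : E → ℝ) (σ : ℝ) (z : E) : E :=
  ∫ x, p x • gaussKernel σ (z - x) • (z - x) ∂μ

def posteriorSecondMoment (μ : Measure E) (p : E → ℝ) (σ : ℝ) (z : E) :
    E →L[ℝ] E :=
  ∫ x, p x • gaussKernel σ (z - x) • rankOne ℝ (z - x) (z - x) ∂μ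

def posteriorMean (μ : Measure E) (p : E → ℝ) (σ : ℝ) (z : E) : E :=
  (posteriorMass μ p σ z)⁻¹ • posteriorMoment μ p σ z

def posteriorCov (μ : Measure E) (p : E → ℝ) (σ : ℝ) (z : E) : E →L[ℝ] E :=
  (posteriorMass μ p σ z)⁻¹ • posteriorSecondMoment μ p σ z -
    rankOne ℝ (posteriorMean μ p σ z) (posteriorMean μ p σ z)

theorem integrable_mul_gaussKernel (hp : Integrable p μ) (z : E) :
    Integrable (fun x => p x * gaussKernel σ (z - x)) μ :=
  hp.smul_comp_sub contDiff_gaussKernel.continuous norm_gaussKernel_le_one z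

theorem integrable_smul_gaussKernel_smul (hp : Integrable p μ) (hσ : σ ≠ 0) (z : E) :
    Integrable (fun x => p x • gaussKernel σ (z - x) • (z - x)) μ :=
  hp.smul_comp_sub (contDiff_gaussKernel.continuous.smul continuous_id)
    (norm_gaussKernel_smul_le hσ) z

theorem integrable_smul_gaussKernel_smul_rankOne (hp : Integrable p μ) (hσ : σ ≠ 0) (z : E) :
    Integrable (fun x => p x • gaussKernel σ (z - x) • rankOne ℝ (z - x) (z - x)) μ :=
  hp.smul_comp_sub (contDiff_gaussKernel.continuous.smul continuous_rankOne_self)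
    (norm_gaussKernel_smul_rankOne_le hσ) z

theorem posteriorMass_pos (hp : Integrable p μ) (hnonneg : ∀ x, 0 ≤ p x)
    (hpos : 0 < ∫ x, p x ∂μ) (z : E) : 0 < posteriorMass μ p σ z := by
  have hsupp : Function.support (fun x => p x * gaussKernel σ (z - x)) = Function.support p := by
    ext x
    simp [(gaussKernel_pos (σ := σ) (z - x)).ne']
  rw [integral_pos_iff_support_of_nonneg hnonneg hp] at hpos
  rw [posteriorMass, integral_pos_iff_support_of_nonneg
    (fun x => mul_nonneg (hnonneg x) (gaussKernel_pos _).le) (integrable_mul_gaussKernel hp z),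
    hsupp]
  exact hpos

variable [CompleteSpace E]

theorem hasFDerivAt_posteriorMass (hp : Integrable p μ) (hσ : σ ≠ 0) (z : E) :
    HasFDerivAt (posteriorMass μ p σ) (-(σ ^ 2)⁻¹ • innerSL ℝ (posteriorMoment μ p σ z)) z := by
  have hfderiv : ∀ v : E,
      fderiv ℝ (gaussKernel σ) v = -(σ ^ 2)⁻¹ • innerSL ℝ (gaussKernel σ v • v) :=
    fun v => (hasFDerivAt_gaussKernel v).fderiv
  have hbound : ∀ v : E, ‖fderiv ℝ (gaussKernel σ) v‖ ≤ (σ ^ 2)⁻¹ * (1 + 2 * σ ^ 2) := by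
    intro v
    rw [hfderiv, norm_smul, innerSL_apply_norm, norm_neg, norm_inv, norm_pow, Real.norm_eq_abs,
      sq_abs]
    exact mul_le_mul_of_nonneg_left (norm_gaussKernel_smul_le hσ v) (by positivity)
  have hderiv : ∫ x, p x • fderiv ℝ (gaussKernel σ) (z - x) ∂μ =
      -(σ ^ 2)⁻¹ • innerSL ℝ (posteriorMoment μ p σ z) := by
    rw [posteriorMoment, ← ContinuousLinearMap.integral_comp_comm _
      (integrable_smul_gaussKernel_smul hp hσ z), ← integral_smul]
    simp_rw [hfderiv, map_smul, smul_comm (p _)]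
  exact hderiv ▸ hasFDerivAt_integral_smul_comp_sub hp contDiff_gaussKernel
    norm_gaussKernel_le_one hbound z

theorem hasFDerivAt_posteriorMoment (hp : Integrable p μ) (hσ : σ ≠ 0) (z : E) :
    HasFDerivAt (posteriorMoment μ p σ)
      (posteriorMass μ p σ z • 1 - (σ ^ 2)⁻¹ • posteriorSecondMoment μ p σ z) z := by
  have hfderiv : ∀ v : E, fderiv ℝ (fun w => gaussKernel σ w • w) v =
      gaussKernel σ v • 1 - (σ ^ 2)⁻¹ • (gaussKernel σ v • rankOne ℝ v v) := by
    intro v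
    rw [(hasFDerivAt_gaussKernel_smul v).fderiv, smul_sub, smul_comm (gaussKernel σ v)]
  have hbound : ∀ v : E, ‖fderiv ℝ (fun w => gaussKernel σ w • w) v‖ ≤ 1 + 2 := by
    intro v
    rw [hfderiv]
    refine (norm_sub_le _ _).trans (add_le_add ?_ ?_)
    · rw [norm_smul, norm_of_nonneg (gaussKernel_pos v).le]
      exact mul_le_one₀ (gaussKernel_le_one v) (norm_nonneg _) ContinuousLinearMap.norm_id_le
    · rw [norm_smul, norm_inv, norm_pow, Real.norm_eq_abs, sq_abs]
      calc (σ ^ 2)⁻¹ * ‖gaussKernel σ v • rankOne ℝ v v‖ ≤ (σ ^ 2)⁻¹ * (2 * σ ^ 2) :=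
            mul_le_mul_of_nonneg_left (norm_gaussKernel_smul_rankOne_le hσ v) (by positivity)
        _ = 2 := by field_simp
  have hderiv : ∫ x, p x • fderiv ℝ (fun w => gaussKernel σ w • w) (z - x) ∂μ =
      posteriorMass μ p σ z • 1 - (σ ^ 2)⁻¹ • posteriorSecondMoment μ p σ z := by
    have hpt : ∀ x, p x • fderiv ℝ (fun w => gaussKernel σ w • w) (z - x) =
        (p x * gaussKernel σ (z - x)) • (1 : E →L[ℝ] E) -
          (σ ^ 2)⁻¹ • (p x • gaussKernel σ (z - x) • rankOne ℝ (z - x) (z - x)) := by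
      intro x
      rw [hfderiv, smul_sub, smul_smul, smul_comm (p x) (σ ^ 2)⁻¹]
    have hM2 : Integrable (fun x => (σ ^ 2)⁻¹ •
        (p x • gaussKernel σ (z - x) • rankOne ℝ (z - x) (z - x))) μ :=
      (integrable_smul_gaussKernel_smul_rankOne hp hσ z).smul ((σ ^ 2)⁻¹)
    simp_rw [hpt]
    rw [integral_sub ((integrable_mul_gaussKernel hp z).smul_const _) hM2, integral_smul_const,
      integral_smul]
    rfl
  exact hderiv ▸ hasFDerivAt_integral_smul_comp_sub hp
    (contDiff_gaussKernel.smul contDiff_id) (norm_gaussKernel_smul_le hσ) hbound z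

theorem hasFDerivAt_posteriorMean (hp : Integrable p μ) (hσ : σ ≠ 0) {z : E}
    (hz : posteriorMass μ p σ z ≠ 0) :
    HasFDerivAt (posteriorMean μ p σ) (1 - (σ ^ 2)⁻¹ • posteriorCov μ p σ z) z := by
  have hinv := (hasDerivAt_inv hz).comp_hasFDerivAt z (hasFDerivAt_posteriorMass hp hσ z)
  refine (hinv.smul (hasFDerivAt_posteriorMoment hp hσ z)).congr_fderiv ?_
  ext v
  simp only [Function.comp_apply, smul_sub, smul_smul, inv_mul_cancel₀ hz, one_smul, neg_smul,
    smul_neg, neg_mul, neg_neg, add_apply, sub_apply, one_apply_eq_self, smul_apply,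
    ContinuousLinearMap.smulRight_apply, coe_innerSL_apply, smul_eq_mul, posteriorCov,
    posteriorMean, map_smul, rankOne_apply]
  module

theorem inner_posteriorMoment (hp : Integrable p μ) (hσ : σ ≠ 0) (z v : E) :
    ⟪posteriorMoment μ p σ z, v⟫_ℝ = ∫ x, p x * gaussKernel σ (z - x) * ⟪z - x, v⟫_ℝ ∂μ := by
  rw [posteriorMoment, real_inner_comm,
    ← integral_inner (integrable_smul_gaussKernel_smul hp hσ z)]
  simp_rw [inner_smul_right, real_inner_comm v, mul_assoc]

theorem inner_posteriorSecondMoment_apply (hp : Integrable p μ) (hσ : σ ≠ 0) (z u v : E) :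
    ⟪posteriorSecondMoment μ p σ z u, v⟫_ℝ =
      ∫ x, p x * gaussKernel σ (z - x) * (⟪z - x, u⟫_ℝ * ⟪z - x, v⟫_ℝ) ∂μ := by
  have hM2 := integrable_smul_gaussKernel_smul_rankOne hp hσ z
  rw [posteriorSecondMoment, ContinuousLinearMap.integral_apply hM2, real_inner_comm,
    ← integral_inner (hM2.apply_continuousLinearMap u)]
  simp_rw [smul_apply, rankOne_apply, inner_smul_right, real_inner_comm v]
  congr 1
  ext x
  ring

theorem inner_posteriorCov_apply (hp : Integrable p μ) (hσ : σ ≠ 0) (z u v : E) :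
    ⟪posteriorCov μ p σ z u, v⟫_ℝ =
      (posteriorMass μ p σ z)⁻¹ *
          ∫ x, p x * gaussKernel σ (z - x) * (⟪z - x, u⟫_ℝ * ⟪z - x, v⟫_ℝ) ∂μ -
        ⟪posteriorMean μ p σ z, u⟫_ℝ * ⟪posteriorMean μ p σ z, v⟫_ℝ := by
  rw [posteriorCov, sub_apply, smul_apply, rankOne_apply,
    inner_sub_left, inner_smul_left, inner_smul_left, inner_posteriorSecondMoment_apply hp hσ]
  simp

theorem isPositive_posteriorCov (hp : Integrable p μ) (hnonneg : ∀ x, 0 ≤ p x) (hσ : σ ≠ 0)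
    (z : E) : (posteriorCov μ p σ z).IsPositive := by
  refine ⟨fun u v => ?_, fun v => ?_⟩
  · change ⟪posteriorCov μ p σ z u, v⟫_ℝ = ⟪u, posteriorCov μ p σ z v⟫_ℝ
    rw [← real_inner_comm u, inner_posteriorCov_apply hp hσ, inner_posteriorCov_apply hp hσ]
    simp_rw [mul_comm ⟪z - _, u⟫_ℝ]
    ring
  · set g := posteriorMass μ p σ z
    set T := ∫ x, p x * gaussKernel σ (z - x) * ⟪z - x, v⟫_ℝ ∂μ
    set Q := ∫ x, p x * gaussKernel σ (z - x) * ⟪z - x, v⟫_ℝ ^ 2 ∂μ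
    have hmean : ⟪posteriorMean μ p σ z, v⟫_ℝ = g⁻¹ * T := by
      rw [posteriorMean, inner_smul_left, inner_posteriorMoment hp hσ]
      rfl
    have hvar : ⟪posteriorCov μ p σ z v, v⟫_ℝ = g⁻¹ * Q - (g⁻¹ * T) ^ 2 := by
      rw [inner_posteriorCov_apply hp hσ, hmean]
      simp only [← sq]
      rfl
    have hw : ∀ x, 0 ≤ p x * gaussKernel σ (z - x) :=
      fun x => mul_nonneg (hnonneg x) (gaussKernel_pos _).le
    have hwq : Integrable (fun x => p x * gaussKernel σ (z - x) * ⟪z - x, v⟫_ℝ) μ :=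
      ((integrable_smul_gaussKernel_smul hp hσ z).inner_const v).congr
        (.of_forall fun x => by simp [inner_smul_left, mul_assoc])
    have hwq2 : Integrable (fun x => p x * gaussKernel σ (z - x) * ⟪z - x, v⟫_ℝ ^ 2) μ :=
      (((integrable_smul_gaussKernel_smul_rankOne hp hσ z).apply_continuousLinearMap v).inner_const
        v).congr (.of_forall fun x => by
          simp only [smul_apply, rankOne_apply, inner_smul_left,
            RCLike.conj_to_real]
          ring)
    have hCS : T ^ 2 ≤ g * Q := sq_integral_mul_le hw (integrable_mul_gaussKernel hp z) hwq hwq2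
    rw [ContinuousLinearMap.reApplyInnerSelf_apply, RCLike.re_to_real, hvar]
    obtain hg | hg := (show 0 ≤ g from integral_nonneg hw).eq_or_lt
    · rw [← hg]
      simp
    · rw [show g⁻¹ * Q - (g⁻¹ * T) ^ 2 = g⁻¹ ^ 2 * (g * Q - T ^ 2) by field_simp]
      exact mul_nonneg (sq_nonneg _) (sub_nonneg.2 hCS)

end Posterior

section Tweedie

variable {d : ℕ} {p : Euc d → ℝ} {σ : ℝ}

theorem postMean_eq_posteriorMean : postMean d p σ = posteriorMean volume p σ := by
  funext z
  simp_rw [postMean, posteriorMean, posteriorMoment, mul_smul]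
  rfl

theorem postCov_apply_eq_inner (hp : Integrable p) (hσ : σ ≠ 0) (z : Euc d) (i j : Fin d) :
    postCov d p σ z i j =
      ⟪posteriorCov volume p σ z (EuclideanSpace.single i 1), EuclideanSpace.single j 1⟫_ℝ := by
  rw [inner_posteriorCov_apply hp hσ, postCov, Matrix.of_apply, postMean_eq_posteriorMean]
  simp only [PiLp.sub_apply, EuclideanSpace.inner_single_right, ringHom_apply, one_mul,
    sub_left_inj]
  rfl

theorem hasFDerivAt_log_smoothed (hp : Integrable p) (hnonneg : ∀ x, 0 ≤ p x)
    (hpos : 0 < ∫ x, p x) (hσ : σ ≠ 0) (z : Euc d) :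
    HasFDerivAt (fun w => log (smoothed d p σ w))
      (-(σ ^ 2)⁻¹ • innerSL ℝ (postMean d p σ z)) z := by
  have hc : 0 < (2 * π * σ ^ 2) ^ (-(d : ℝ) / 2) := by positivity
  have hmass := posteriorMass_pos (σ := σ) hp hnonneg hpos z
  refine (((hasFDerivAt_posteriorMass hp hσ z).const_mul _).log
    (mul_pos hc hmass).ne').congr_fderiv ?_
  ext v
  simp only [mul_inv_rev, neg_smul, smul_neg, neg_apply, smul_apply, coe_innerSL_apply,
    smul_eq_mul, postMean_eq_posteriorMean, posteriorMean, map_smul, neg_inj]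
  field_simp

theorem hessMat_log_smoothed (hp : Integrable p) (hnonneg : ∀ x, 0 ≤ p x)
    (hpos : 0 < ∫ x, p x) (hσ : σ ≠ 0) (z : Euc d) :
    hessMat d (fun w => log (smoothed d p σ w)) z =
      -(σ ^ 2)⁻¹ • (1 - (σ ^ 2)⁻¹ • postCov d p σ z) := by
  ext i j
  have hgrad : (fun y => fderiv ℝ (fun w => log (smoothed d p σ w)) y (EuclideanSpace.single j 1))
      = fun y => -(σ ^ 2)⁻¹ * posteriorMean volume p σ y j := by
    funext y
    rw [(hasFDerivAt_log_smoothed hp hnonneg hpos hσ y).fderiv, postMean_eq_posteriorMean]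
    simp [EuclideanSpace.inner_single_right]
  have hmean : HasFDerivAt (fun y => -(σ ^ 2)⁻¹ * posteriorMean volume p σ y j)
      (-(σ ^ 2)⁻¹ • (EuclideanSpace.proj j ∘L (1 - (σ ^ 2)⁻¹ • posteriorCov volume p σ z))) z :=
    ((EuclideanSpace.proj j).hasFDerivAt.comp z (hasFDerivAt_posteriorMean hp hσ
      (posteriorMass_pos hp hnonneg hpos z).ne')).const_mul _
  rw [hessMat, Matrix.of_apply, hgrad, hmean.fderiv]
  simp [postCov_apply_eq_inner hp hσ, EuclideanSpace.inner_single_right, Matrix.one_apply,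
    eq_comm]

theorem postCov_posSemidef (hp : Integrable p) (hnonneg : ∀ x, 0 ≤ p x) (hσ : σ ≠ 0)
    (z : Euc d) : (postCov d p σ z).PosSemidef := by
  let b := EuclideanSpace.basisFun (Fin d) ℝ
  have hmatrix : postCov d p σ z = (LinearMap.toMatrix b.toBasis b.toBasis
      (posteriorCov volume p σ z).toLinearMap).transpose := by
    ext i j
    rw [Matrix.transpose_apply, LinearMap.toMatrix_apply, postCov_apply_eq_inner hp hσ]
    simp [b, EuclideanSpace.inner_single_right]
  rw [hmatrix]
  exact ((LinearMap.posSemidef_toMatrix_iff b).2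
    (isPositive_posteriorCov hp hnonneg hσ z).toLinearMap).transpose

end Tweedie

theorem second_order_tweedie_general
    (d : ℕ) (p : Euc d → ℝ)
    (hnonneg : ∀ x, 0 ≤ p x)
    (hint : (∫ x : Euc d, p x) = 1)
    (σ : ℝ) (hσ : 0 < σ) :
    ∀ z : Euc d,
      -(hessMat d (fun w => Real.log (smoothed d p σ w)) z) =
        (σ ^ 2)⁻¹ • ((1 : Matrix (Fin d) (Fin d) ℝ) - (σ ^ 2)⁻¹ • postCov d p σ z) ∧
      (postCov d p σ z).PosSemidef ∧
      ((σ ^ 2)⁻¹ • (1 : Matrix (Fin d) (Fin d) ℝ) -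
        -(hessMat d (fun w => Real.log (smoothed d p σ w)) z)).PosSemidef := by
  have hp : Integrable p := by
    by_contra h
    rw [integral_undef h] at hint
    exact zero_ne_one hint
  have hpos : 0 < ∫ x, p x := hint ▸ one_pos
  intro z
  have hhess := hessMat_log_smoothed hp hnonneg hpos hσ.ne' z
  have hcov := postCov_posSemidef hp hnonneg hσ.ne' z
  refine ⟨by rw [hhess, neg_smul, neg_neg], hcov, ?_⟩
  rw [hhess, neg_smul, neg_neg, ← smul_sub, sub_sub_cancel]
  exact (hcov.smul (by positivity)).smul (by positivity)

/-- **Second-order Tweedie identity**: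
`−∇² ln p_σ(z) = (1/σ²)(I_d − (1/σ²) C_σ(z))`; in particular, since the posterior covariance
`C_σ(z)` is positive semidefinite, `−∇² ln p_σ(z) ⪯ (1/σ²) I_d`. -/
theorem second_order_tweedie
    (d : ℕ) (p : Euc d → ℝ)
    (hmeas : Measurable p) (hnonneg : ∀ x, 0 ≤ p x)
    (hint : (∫ x : Euc d, p x) = 1)
    (σ : ℝ) (hσ : 0 < σ) :
    ∀ z : Euc d,
      -(hessMat d (fun w => Real.log (smoothed d p σ w)) z) =
        (σ ^ 2)⁻¹ • ((1 : Matrix (Fin d) (Fin d) ℝ) - (σ ^ 2)⁻¹ • postCov d p σ z) ∧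
      (postCov d p σ z).PosSemidef ∧
      ((σ ^ 2)⁻¹ • (1 : Matrix (Fin d) (Fin d) ℝ) -
        -(hessMat d (fun w => Real.log (smoothed d p σ w)) z)).PosSemidef :=
  second_order_tweedie_general d p hnonneg hint σ hσ

end
end

section
/- Let p be a probability density on ℝ^d that is log-concave and strictly positive on ℝ^d. Fix y ∈ ℝ^d and τ > 0. For σ > 0 let x⋆_σ denote the unique minimiser of F_σ(x) = (1/2)‖y − x‖² − τ ln p_σ(x), and let x⋆ denote the unique minimiser of F(x) = (1/2)‖y − x‖² − τ ln p(x). Then x⋆_σ → x⋆ as σ → 0⁺. -/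
open MeasureTheory Real Filter

noncomputable section

/-- The smoothed proximal objective `F_σ(x) = (1/2)‖y − x‖² − τ ln p_σ(x)`. -/
def Fsig (d : ℕ) (p : Euc d → ℝ) (y : Euc d) (τ σ : ℝ) (x : Euc d) : ℝ :=
  (1 / 2) * ‖y - x‖ ^ 2 - τ * Real.log (smoothed d p σ x)

/-- The proximal objective `F(x) = (1/2)‖y − x‖² − τ ln p(x)`. -/
def Fobj (d : ℕ) (p : Euc d → ℝ) (y : Euc d) (τ : ℝ) (x : Euc d) : ℝ :=
  (1 / 2) * ‖y - x‖ ^ 2 - τ * Real.log (p x)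

/-!
Write `p_σ(z) = ∫ p(z - σu) g(u) du` with `g` the standard Gaussian density. A positive
log-concave probability density is continuous and bounded, so `p_σ → p` pointwise and
`p_σ ≤ sup p`; the latter confines the minimisers `x⋆_σ` to a fixed ball `B`. On `B` the concave
function `ln p` has a uniform slope bound `ln p(z + v) ≤ ln p(z) + K‖v‖`, hence
`p_σ ≤ φ(Kσ) · p` on `B`, where `φ(t) = ∫ e^{t‖u‖} g(u) du → 1` as `t → 0`. As `F` is
1-strongly convex,
`¼‖x⋆_σ - x⋆‖² ≤ F(x⋆_σ) - F(x⋆) ≤ τ ln φ(Kσ) + τ (ln p(x⋆) - ln p_σ(x⋆))`,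
and the right-hand side tends to `0`.
-/

open Set Metric Topology Module

section StdGaussianDensity

variable (V : Type*) [NormedAddCommGroup V] [InnerProductSpace ℝ V]

def stdGaussianDensity (u : V) : ℝ :=
  (2 * π) ^ (-(finrank ℝ V : ℝ) / 2) * rexp (-(1 / 2) * ‖u‖ ^ 2)

variable {V}

lemma stdGaussianDensity_pos (u : V) : 0 < stdGaussianDensity V u := by
  unfold stdGaussianDensity; positivity

@[fun_prop]
lemma continuous_stdGaussianDensity : Continuous (stdGaussianDensity V) := by
  unfold stdGaussianDensity; fun_prop

variable [FiniteDimensional ℝ V] [MeasurableSpace V] [BorelSpace V]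

lemma integrable_exp_neg_mul_sq_norm {b : ℝ} (hb : 0 < b) :
    Integrable fun v : V => rexp (-b * ‖v‖ ^ 2) :=
  Integrable.of_integral_ne_zero <| by
    rw [GaussianFourier.integral_rexp_neg_mul_sq_norm hb]; positivity

lemma integrable_stdGaussianDensity : Integrable (stdGaussianDensity V) :=
  (integrable_exp_neg_mul_sq_norm one_half_pos).const_mul _

lemma integral_stdGaussianDensity : ∫ u : V, stdGaussianDensity V u = 1 := by
  simp_rw [stdGaussianDensity]
  rw [integral_const_mul,
    GaussianFourier.integral_rexp_neg_mul_sq_norm one_half_pos,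
    show π / (1 / 2) = 2 * π by ring, ← rpow_add (by positivity)]
  ring_nf
  exact rpow_zero _

lemma integrable_exp_mul_norm_mul_stdGaussianDensity (c : ℝ) :
    Integrable fun u : V => rexp (c * ‖u‖) * stdGaussianDensity V u := by
  refine ((integrable_exp_neg_mul_sq_norm (V := V) (b := 1 / 4) (by norm_num)).const_mul
    ((2 * π) ^ (-(finrank ℝ V : ℝ) / 2) * rexp (c ^ 2))).mono'
    (by fun_prop : Continuous _).aestronglyMeasurable (.of_forall fun u => ?_)
  rw [norm_of_nonneg (mul_nonneg (exp_pos _).le (stdGaussianDensity_pos u).le), stdGaussianDensity,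
    mul_left_comm, ← exp_add, mul_assoc, ← exp_add]
  refine mul_le_mul_of_nonneg_left (exp_le_exp.2 ?_) (by positivity)
  nlinarith [sq_nonneg (c - ‖u‖ / 2)]

lemma tendsto_integral_exp_mul_norm_mul_stdGaussianDensity :
    Tendsto (fun t : ℝ => ∫ u : V, rexp (t * ‖u‖) * stdGaussianDensity V u) (𝓝 0) (𝓝 1) := by
  have hcont := continuousAt_of_dominated (x₀ := (0 : ℝ))
    (F := fun (t : ℝ) (u : V) => rexp (t * ‖u‖) * stdGaussianDensity V u)
    (.of_forall fun t => (by fun_prop : Continuous _).aestronglyMeasurable) ?_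
    (integrable_exp_mul_norm_mul_stdGaussianDensity 1) (.of_forall fun u => by fun_prop)
  · simpa [integral_stdGaussianDensity] using hcont.tendsto
  · filter_upwards [Icc_mem_nhds neg_one_lt_zero one_pos] with t ht
    refine .of_forall fun u => ?_
    rw [norm_of_nonneg (mul_nonneg (exp_pos _).le (stdGaussianDensity_pos u).le)]
    refine mul_le_mul_of_nonneg_right (exp_le_exp.2 ?_) (stdGaussianDensity_pos u).le
    nlinarith [ht.1, ht.2, norm_nonneg u]

end StdGaussianDensity

section ConcaveSlope

variable {E : Type*} [NormedAddCommGroup E] [NormedSpace ℝ E] {ℓ : E → ℝ}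

lemma ConcaveOn.le_add_mul_norm_of_forall_norm_le (hℓ : ConcaveOn ℝ univ ℓ) {z : E}
    {K δ : ℝ} (hδ : 0 < δ) (h : ∀ v, ‖v‖ ≤ δ → ℓ (z + v) ≤ ℓ z + K * ‖v‖) (v : E) :
    ℓ (z + v) ≤ ℓ z + K * ‖v‖ := by
  rcases le_or_gt ‖v‖ δ with hv | hv
  · exact h v hv
  have hv0 : 0 < ‖v‖ := hδ.trans hv
  set t := δ / ‖v‖
  have ht0 : 0 < t := by positivity
  have htv : ‖t • v‖ = δ := by rw [norm_smul, norm_of_nonneg ht0.le, div_mul_cancel₀ _ hv0.ne']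
  have hconc := hℓ.2 (mem_univ z) (mem_univ (z + v)) (sub_nonneg.2 ((div_le_one hv0).2 hv.le))
    ht0.le (sub_add_cancel 1 t)
  rw [show (1 - t) • z + t • (z + v) = z + t • v by module, smul_eq_mul, smul_eq_mul] at hconc
  have hstep := h (t • v) htv.le
  rw [htv, ← div_mul_cancel₀ δ hv0.ne'] at hstep
  have : t * ℓ (z + v) ≤ t * (ℓ z + K * ‖v‖) := by nlinarith
  exact le_of_mul_le_mul_left this ht0

lemma ConcaveOn.exists_forall_mem_closedBall_le_add_mul_norm [FiniteDimensional ℝ E]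
    (hℓ : ConcaveOn ℝ univ ℓ) (x₀ : E) (R : ℝ) :
    ∃ K, ∀ z ∈ closedBall x₀ R, ∀ v, ℓ (z + v) ≤ ℓ z + K * ‖v‖ := by
  have hcont : Continuous ℓ := continuousOn_univ.1 (hℓ.continuousOn isOpen_univ)
  have hbdd : Bornology.IsBounded (ℓ '' ball x₀ (R + 2)) :=
    ((isCompact_closedBall x₀ (R + 2)).image hcont).isBounded.subset
      (image_mono ball_subset_closedBall)
  obtain ⟨K, hK⟩ := (hℓ.subset (subset_univ _) (convex_ball _ _))
    |>.exists_lipschitzOnWith_of_isBounded (by linarith : R + 1 < R + 2) hbdd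
  refine ⟨K, fun z hz => hℓ.le_add_mul_norm_of_forall_norm_le one_half_pos fun v hv => ?_⟩
  have hz' : z ∈ ball x₀ (R + 1) := closedBall_subset_ball (by linarith) hz
  have hzv : z + v ∈ ball x₀ (R + 1) := by
    rw [mem_ball] at hz' ⊢
    have := dist_triangle (z + v) z x₀
    rw [dist_self_add_left] at this
    have := mem_closedBall.1 hz
    linarith
  have hlip := hK.dist_le_mul _ hzv _ hz'
  rw [Real.dist_eq, dist_self_add_left] at hlip
  linarith [le_abs_self (ℓ (z + v) - ℓ z)]

end ConcaveSlope

section LogConcave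

variable {E : Type*} [NormedAddCommGroup E] [NormedSpace ℝ E] [FiniteDimensional ℝ E]
  {p : E → ℝ}

lemma continuous_of_concaveOn_log (hpos : ∀ x, 0 < p x)
    (hconc : ConcaveOn ℝ univ fun x => log (p x)) : Continuous p := by
  simpa [Function.comp_def, exp_log (hpos _)] using
    continuous_exp.comp (continuousOn_univ.1 (hconc.continuousOn isOpen_univ))

lemma exists_forall_le_of_concaveOn_log [MeasurableSpace E] [BorelSpace E] (μ : Measure E)
    [μ.IsAddHaarMeasure] (hpos : ∀ x, 0 < p x) (hconc : ConcaveOn ℝ univ fun x => log (p x))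
    (hint : Integrable p μ) : ∃ M, ∀ x, p x ≤ M := by
  obtain ⟨a, -, ha⟩ := (isCompact_closedBall (0 : E) 1).exists_isMinOn
    (nonempty_closedBall.2 zero_le_one) (continuous_of_concaveOn_log hpos hconc).continuousOn
  set V := μ.real (closedBall (0 : E) (1 / 2))
  have hV : 0 < V :=
    ENNReal.toReal_pos (measure_closedBall_pos μ 0 one_half_pos).ne' measure_closedBall_lt_top.ne
  refine ⟨((∫ x, p x ∂μ) / V) ^ 2 / p a, fun x => ?_⟩
  set c := rexp ((log (p x) + log (p a)) / 2)
  have hc : c ^ 2 = p x * p a := by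
    rw [← exp_nat_mul, Nat.cast_ofNat, mul_div_cancel₀ _ two_ne_zero, exp_add, exp_log (hpos x),
      exp_log (hpos a)]
  -- each point of this ball is the midpoint of `x` and a point of `closedBall 0 1`
  have hlow : ∀ m ∈ closedBall ((1 / 2 : ℝ) • x) (1 / 2), c ≤ p m := by
    intro m hm
    have hb : (2 : ℝ) • m - x ∈ closedBall (0 : E) 1 := by
      rw [mem_closedBall_zero_iff, show (2 : ℝ) • m - x = (2 : ℝ) • (m - (1 / 2 : ℝ) • x) by
        module, norm_smul, Real.norm_two]
      linarith [mem_closedBall_iff_norm.1 hm]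
    have hmid := hconc.2 (mem_univ x) (mem_univ ((2 : ℝ) • m - x)) one_half_pos.le
      one_half_pos.le (add_halves 1)
    rw [show (1 / 2 : ℝ) • x + (1 / 2 : ℝ) • ((2 : ℝ) • m - x) = m by module, smul_eq_mul,
      smul_eq_mul] at hmid
    have hab := log_le_log (hpos a) (ha hb)
    rw [← exp_log (hpos m)]
    exact exp_le_exp.2 (by linarith)
  have hmass : c * V ≤ ∫ x, p x ∂μ :=
    calc c * V = c * μ.real (closedBall ((1 / 2 : ℝ) • x) (1 / 2)) := by
          simp only [V, measureReal_def, Measure.addHaar_closedBall_center]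
      _ ≤ ∫ m in closedBall ((1 / 2 : ℝ) • x) (1 / 2), p m ∂μ :=
          setIntegral_ge_of_const_le_real measurableSet_closedBall measure_closedBall_lt_top.ne
            hlow hint.integrableOn
      _ ≤ ∫ m, p m ∂μ := setIntegral_le_integral hint (.of_forall fun m => (hpos m).le)
  rw [le_div_iff₀ (hpos a), ← hc]
  gcongr
  exact (le_div_iff₀ hV).2 hmass

end LogConcave

lemma StrongConvexOn.add_mul_sq_norm_sub_le_of_isMinOn {E : Type*} [NormedAddCommGroup E]
    [NormedSpace ℝ E] {f : E → ℝ} {s : Set E} {m : ℝ} (hf : StrongConvexOn s m f) {x₀ x : E}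
    (hx₀ : x₀ ∈ s) (hmin : IsMinOn f s x₀) (hx : x ∈ s) :
    f x₀ + m / 4 * ‖x - x₀‖ ^ 2 ≤ f x := by
  have hmid := hf.2 hx hx₀ one_half_pos.le one_half_pos.le (add_halves 1)
  have hle := isMinOn_iff.1 hmin _ (hf.1 hx hx₀ one_half_pos.le one_half_pos.le (add_halves 1))
  simp only [smul_eq_mul] at hmid
  linarith

lemma tendsto_of_sq_norm_sub_le {α E : Type*} [NormedAddCommGroup E] {l : Filter α}
    {f : α → E} {a : E} {g : α → ℝ} (hg : Tendsto g l (𝓝 0))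
    (hfg : ∀ᶠ x in l, ‖f x - a‖ ^ 2 ≤ g x) : Tendsto f l (𝓝 a) := by
  refine tendsto_iff_norm_sub_tendsto_zero.2 (squeeze_zero' (.of_forall fun x => norm_nonneg _)
    (hfg.mono fun x hx => (le_abs_self _).trans (abs_le_sqrt hx)) ?_)
  simpa using hg.sqrt

section Smoothing

variable {d : ℕ}

lemma smoothed_eq_integral_stdGaussianDensity (p : Euc d → ℝ) {σ : ℝ} (hσ : 0 < σ)
    (z : Euc d) : smoothed d p σ z = ∫ u, p (z - σ • u) * stdGaussianDensity (Euc d) u := by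
  set f : Euc d → ℝ := fun v => p (z - v) * rexp (-‖v‖ ^ 2 / (2 * σ ^ 2))
  have htranslate : ∫ x, p x * rexp (-‖z - x‖ ^ 2 / (2 * σ ^ 2)) = ∫ v, f v := by
    simpa [f] using (integral_sub_left_eq_self
      (fun x => p x * rexp (-‖z - x‖ ^ 2 / (2 * σ ^ 2))) volume z).symm
  have hscale : ∫ u : Euc d, f (σ • u) = (σ ^ d)⁻¹ * ∫ v, f v := by
    rw [Measure.integral_comp_smul, finrank_euclideanSpace_fin, abs_of_pos (by positivity),
      smul_eq_mul]
  have hintegrand (u : Euc d) : p (z - σ • u) * stdGaussianDensity (Euc d) u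
      = (2 * π) ^ (-(d : ℝ) / 2) * f (σ • u) := by
    simp only [f, stdGaussianDensity, finrank_euclideanSpace_fin, norm_smul, mul_pow,
      Real.norm_eq_abs, sq_abs]
    rw [show -(σ ^ 2 * ‖u‖ ^ 2) / (2 * σ ^ 2) = -(1 / 2) * ‖u‖ ^ 2 by field_simp]
    ring
  have hconst : (2 * π * σ ^ 2) ^ (-(d : ℝ) / 2) = (2 * π) ^ (-(d : ℝ) / 2) * (σ ^ d)⁻¹ := by
    rw [mul_rpow (by positivity) (by positivity), ← rpow_natCast σ 2, ← rpow_mul hσ.le,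
      show ((2 : ℕ) : ℝ) * (-(d : ℝ) / 2) = -d by push_cast; ring, rpow_neg hσ.le, rpow_natCast]
  rw [smoothed, htranslate, funext hintegrand, integral_const_mul, hscale, hconst, mul_assoc]

variable {p : Euc d → ℝ} {σ : ℝ}

lemma smoothed_le_mul_integral_exp_of_log_le (hpos : ∀ x, 0 < p x) {z : Euc d} {K : ℝ}
    (hz : ∀ v, log (p (z + v)) ≤ log (p z) + K * ‖v‖) (hσ : 0 < σ) :
    smoothed d p σ z ≤ p z * ∫ u, rexp (K * σ * ‖u‖) * stdGaussianDensity (Euc d) u := by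
  have hpointwise (u : Euc d) : p (z - σ • u) ≤ p z * rexp (K * σ * ‖u‖) := by
    have h := exp_le_exp.2 (hz (-(σ • u)))
    rwa [exp_add, exp_log (hpos _), exp_log (hpos _), ← sub_eq_add_neg, norm_neg, norm_smul,
      Real.norm_eq_abs, abs_of_pos hσ, ← mul_assoc] at h
  rw [smoothed_eq_integral_stdGaussianDensity p hσ, ← integral_const_mul]
  refine integral_mono_of_nonneg (.of_forall fun u => ?_)
    ((integrable_exp_mul_norm_mul_stdGaussianDensity _).const_mul _) (.of_forall fun u => ?_)
  · exact mul_nonneg (hpos _).le (stdGaussianDensity_pos u).le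
  · exact (mul_le_mul_of_nonneg_right (hpointwise u) (stdGaussianDensity_pos u).le).trans_eq
      (mul_assoc _ _ _)

variable {M : ℝ}

lemma norm_comp_sub_smul_mul_stdGaussianDensity_le (hp0 : ∀ x, 0 ≤ p x) (hpM : ∀ x, p x ≤ M)
    (z u : Euc d) :
    ‖p (z - σ • u) * stdGaussianDensity (Euc d) u‖ ≤ M * stdGaussianDensity (Euc d) u := by
  rw [norm_of_nonneg (mul_nonneg (hp0 _) (stdGaussianDensity_pos u).le)]
  exact mul_le_mul_of_nonneg_right (hpM _) (stdGaussianDensity_pos u).le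

lemma integrable_comp_sub_smul_mul_stdGaussianDensity (hp : Continuous p) (hp0 : ∀ x, 0 ≤ p x)
    (hpM : ∀ x, p x ≤ M) (z : Euc d) :
    Integrable fun u => p (z - σ • u) * stdGaussianDensity (Euc d) u :=
  (integrable_stdGaussianDensity.const_mul M).mono'
    (by fun_prop : Continuous _).aestronglyMeasurable
    (.of_forall (norm_comp_sub_smul_mul_stdGaussianDensity_le hp0 hpM z))

lemma smoothed_le (hp : Continuous p) (hp0 : ∀ x, 0 ≤ p x) (hpM : ∀ x, p x ≤ M) (hσ : 0 < σ)
    (z : Euc d) : smoothed d p σ z ≤ M :=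
  calc smoothed d p σ z = ∫ u, p (z - σ • u) * stdGaussianDensity (Euc d) u :=
        smoothed_eq_integral_stdGaussianDensity p hσ z
    _ ≤ ∫ u, M * stdGaussianDensity (Euc d) u :=
        integral_mono (integrable_comp_sub_smul_mul_stdGaussianDensity hp hp0 hpM z)
          (integrable_stdGaussianDensity.const_mul M)
          fun u => (le_abs_self _).trans (norm_comp_sub_smul_mul_stdGaussianDensity_le hp0 hpM z u)
    _ = M := by rw [integral_const_mul, integral_stdGaussianDensity, mul_one]

lemma smoothed_pos (hp : Continuous p) (hpos : ∀ x, 0 < p x) (hpM : ∀ x, p x ≤ M) (hσ : 0 < σ)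
    (z : Euc d) : 0 < smoothed d p σ z := by
  have hintegrand (u : Euc d) : 0 < p (z - σ • u) * stdGaussianDensity (Euc d) u :=
    mul_pos (hpos _) (stdGaussianDensity_pos u)
  rw [smoothed_eq_integral_stdGaussianDensity p hσ, integral_pos_iff_support_of_nonneg
    (fun u => (hintegrand u).le)
    (integrable_comp_sub_smul_mul_stdGaussianDensity hp (fun x => (hpos x).le) hpM z),
    Function.support_eq_univ fun u => (hintegrand u).ne', Measure.measure_univ_pos]
  exact NeZero.ne volume

lemma tendsto_smoothed (hp : Continuous p) (hp0 : ∀ x, 0 ≤ p x) (hpM : ∀ x, p x ≤ M)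
    (z : Euc d) : Tendsto (fun σ => smoothed d p σ z) (𝓝[>] 0) (𝓝 (p z)) := by
  have hcont : ContinuousAt (fun σ : ℝ => ∫ u, p (z - σ • u) * stdGaussianDensity (Euc d) u) 0 :=
    continuousAt_of_dominated
      (.of_forall fun σ => (by fun_prop : Continuous _).aestronglyMeasurable)
      (.of_forall fun σ => .of_forall (norm_comp_sub_smul_mul_stdGaussianDensity_le hp0 hpM z))
      (integrable_stdGaussianDensity.const_mul M) (.of_forall fun u => by fun_prop)
  have hzero : ∫ u, p (z - (0 : ℝ) • u) * stdGaussianDensity (Euc d) u = p z := by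
    simp [integral_const_mul, integral_stdGaussianDensity]
  refine (hzero ▸ hcont.tendsto.mono_left nhdsWithin_le_nhds).congr' ?_
  filter_upwards [self_mem_nhdsWithin] with σ hσ
  exact (smoothed_eq_integral_stdGaussianDensity p hσ z).symm

end Smoothing

section Proximal

variable {d : ℕ} {p : Euc d → ℝ} {y : Euc d} {τ : ℝ}

lemma strongConvexOn_fobj (hτ : 0 ≤ τ)
    (hconc : ConcaveOn ℝ univ fun x => log (p x)) : StrongConvexOn univ 1 (Fobj d p y τ) := by
  have haffine : ConvexOn ℝ univ fun x => -innerₗ (Euc d) y x + 1 / 2 * ‖y‖ ^ 2 :=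
    ((-innerₗ (Euc d) y).convexOn convex_univ).add_const _
  have hdecomp : (fun x => Fobj d p y τ x - 1 / 2 * ‖x‖ ^ 2)
      = (fun x => -innerₗ (Euc d) y x + 1 / 2 * ‖y‖ ^ 2) - τ • fun x => log (p x) := by
    ext x
    simp only [Fobj, norm_sub_sq_real, Pi.sub_apply, Pi.smul_apply, smul_eq_mul,
      innerₗ_apply_apply]
    ring
  rw [strongConvexOn_iff_convex, hdecomp]
  exact haffine.sub (hconc.smul hτ)

lemma exists_eventually_mem_closedBall {M : ℝ} (hp : Continuous p) (hpos : ∀ x, 0 < p x)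
    (hpM : ∀ x, p x ≤ M) (hτ : 0 ≤ τ) {xσ : ℝ → Euc d}
    (hmin : ∀ σ, 0 < σ → ∀ x, Fsig d p y τ σ (xσ σ) ≤ Fsig d p y τ σ x) :
    ∃ R, ∀ᶠ σ in 𝓝[>] 0, xσ σ ∈ closedBall y R := by
  have hlim : Tendsto (fun σ => Fsig d p y τ σ y) (𝓝[>] 0) (𝓝 (Fobj d p y τ y)) :=
    tendsto_const_nhds.sub
      (((tendsto_smoothed hp (fun x => (hpos x).le) hpM y).log (hpos y).ne').const_mul τ)
  refine ⟨√(2 * (Fobj d p y τ y + 1 + τ * log M)), ?_⟩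
  filter_upwards [hlim.eventually (gt_mem_nhds (lt_add_one _)), self_mem_nhdsWithin]
    with σ hσy hσ
  have hlogM : log (smoothed d p σ (xσ σ)) ≤ log M :=
    log_le_log (smoothed_pos hp hpos hpM hσ _) (smoothed_le hp (fun x => (hpos x).le) hpM hσ _)
  have hσmin := hmin σ hσ y
  rw [mem_closedBall, dist_comm, dist_eq_norm]
  refine (le_abs_self _).trans (abs_le_sqrt ?_)
  unfold Fsig at hσy hσmin
  nlinarith [mul_le_mul_of_nonneg_left hlogM hτ]

lemma quarter_mul_sq_norm_sub_le {σ c : ℝ} (hτ : 0 ≤ τ) (hpos : ∀ x, 0 < p x)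
    (hconc : ConcaveOn ℝ univ fun x => log (p x)) {xstar xσ : Euc d}
    (hxstar : ∀ x, Fobj d p y τ xstar ≤ Fobj d p y τ x)
    (hxσ : ∀ x, Fsig d p y τ σ xσ ≤ Fsig d p y τ σ x) (hsm_pos : 0 < smoothed d p σ xσ)
    (hsm_le : smoothed d p σ xσ ≤ p xσ * c) :
    1 / 4 * ‖xσ - xstar‖ ^ 2 ≤ τ * log c + τ * (log (p xstar) - log (smoothed d p σ xstar)) := by
  have hc : 0 < c := pos_of_mul_pos_right (hsm_pos.trans_le hsm_le) (hpos xσ).le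
  have hlog : log (smoothed d p σ xσ) ≤ log (p xσ) + log c := by
    rw [← log_mul (hpos xσ).ne' hc.ne']
    exact log_le_log hsm_pos hsm_le
  have hgrowth := (strongConvexOn_fobj hτ hconc).add_mul_sq_norm_sub_le_of_isMinOn
    (mem_univ xstar) (isMinOn_univ_iff.2 hxstar) (mem_univ xσ)
  have hσmin := hxσ xstar
  unfold Fobj Fsig at *
  nlinarith [mul_le_mul_of_nonneg_left hlog hτ]

end Proximal

theorem smoothed_minimisers_tendsto_prox_general
    (d : ℕ) (p : Euc d → ℝ)
    (hint : (∫ x : Euc d, p x) = 1)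
    (hlogconcave : ConcaveOn ℝ Set.univ (fun x => Real.log (p x)))
    (hpos : ∀ x, 0 < p x)
    (y : Euc d) (τ : ℝ) (hτ : 0 < τ)
    (xstarσ : ℝ → Euc d)
    (hmin : ∀ σ : ℝ, 0 < σ → ∀ x, Fsig d p y τ σ (xstarσ σ) ≤ Fsig d p y τ σ x)
    (xstar : Euc d) (hxstar : ∀ x, Fobj d p y τ xstar ≤ Fobj d p y τ x) :
    Tendsto xstarσ (nhdsWithin (0 : ℝ) (Set.Ioi 0)) (nhds xstar) := by
  have hp : Continuous p := continuous_of_concaveOn_log hpos hlogconcave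
  obtain ⟨M, hM⟩ := exists_forall_le_of_concaveOn_log volume hpos hlogconcave
    (Integrable.of_integral_ne_zero (by rw [hint]; exact one_ne_zero))
  obtain ⟨R, hR⟩ := exists_eventually_mem_closedBall hp hpos hM hτ.le hmin
  obtain ⟨K, hK⟩ := hlogconcave.exists_forall_mem_closedBall_le_add_mul_norm y R
  set φ : ℝ → ℝ := fun σ => ∫ u, rexp (K * σ * ‖u‖) * stdGaussianDensity (Euc d) u
  have hφ : Tendsto φ (𝓝[>] 0) (𝓝 1) :=
    tendsto_integral_exp_mul_norm_mul_stdGaussianDensity.comp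
      (tendsto_nhdsWithin_of_tendsto_nhds (by simpa using (continuous_const_mul K).tendsto 0))
  have hsm := (tendsto_smoothed hp (fun x => (hpos x).le) hM xstar).log (hpos xstar).ne'
  refine tendsto_of_sq_norm_sub_le (g := fun σ =>
    4 * (τ * log (φ σ) + τ * (log (p xstar) - log (smoothed d p σ xstar)))) ?_ ?_
  · simpa using (((hφ.log one_ne_zero).const_mul τ).add
      (((tendsto_const_nhds (x := log (p xstar))).sub hsm).const_mul τ)).const_mul 4
  filter_upwards [hR, self_mem_nhdsWithin] with σ hσR hσ
  have := quarter_mul_sq_norm_sub_le hτ.le hpos hlogconcave hxstar (hmin σ hσ)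
    (smoothed_pos hp hpos hM hσ _) (smoothed_le_mul_integral_exp_of_log_le hpos (hK _ hσR) hσ)
  linarith

/-- For a log-concave strictly positive prior, the minimisers `x⋆_σ` of the smoothed
proximal objectives converge, as `σ → 0⁺`, to the minimiser `x⋆` of the proximal
objective `F`. -/
theorem smoothed_minimisers_tendsto_prox
    (d : ℕ) (p : Euc d → ℝ)
    (hmeas : Measurable p) (hnonneg : ∀ x, 0 ≤ p x)
    (hint : (∫ x : Euc d, p x) = 1)
    (hlogconcave : ConcaveOn ℝ Set.univ (fun x => Real.log (p x)))
    (hpos : ∀ x, 0 < p x)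
    (y : Euc d) (τ : ℝ) (hτ : 0 < τ)
    (xstarσ : ℝ → Euc d)
    (hmin : ∀ σ : ℝ, 0 < σ → ∀ x, Fsig d p y τ σ (xstarσ σ) ≤ Fsig d p y τ σ x)
    (xstar : Euc d) (hxstar : ∀ x, Fobj d p y τ xstar ≤ Fobj d p y τ x) :
    Tendsto xstarσ (nhdsWithin (0 : ℝ) (Set.Ioi 0)) (nhds xstar) :=
  smoothed_minimisers_tendsto_prox_general d p hint hlogconcave hpos y τ hτ xstarσ hmin xstar hxstar

end
end

section
/- Let p be a probability density on ℝ^d that is log-concave and strictly positive on ℝ^d. Then for every compact set K ⊂ ℝ^d, sup_{x ∈ K} | ln p_σ(x) − ln p(x) | → 0 as σ → 0⁺; that is, ln p_σ converges to ln p uniformly on compact sets as the smoothing level vanishes. -/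
/-!
Write `g_t` for the centred Gaussian density of covariance `t • 1`, so that `p_σ = p ⋆ g_{σ²}`
and `p_σ(z) - p(z) = ∫ (p(x) - p(z)) g_t(z - x) dx`. Given `δ > 0`, the integrand is uniformly
small on `‖z - x‖ < δ` by uniform continuity of `p` near `K` (`log p` is concave on all of
`ℝ^d`, hence continuous); on `‖z - x‖ ≥ δ` the kernel is bounded both by `g_t(δ)`, which
tends to `0` as `t → 0⁺` and is integrated against `|p|`, and by `2^{d/2} e^{-δ²/4t} g_{2t}`,
whose mass tends to `0`. Hence `p_σ → p` uniformly on `K`, and since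
`p ≥ m > 0` on `K` and `log` is Lipschitz on `[m/2, ∞)`, so do the logarithms.
-/

open MeasureTheory Real Filter

noncomputable section

open Topology Set

/-- The density of the centred Gaussian with covariance `t • 1` in dimension `d`, at a point of
norm `r`. -/
def gaussianDensity (d : ℕ) (t r : ℝ) : ℝ :=
  (2 * π * t) ^ (-(d : ℝ) / 2) * exp (-r ^ 2 / (2 * t))

section GaussianDensity

variable {d : ℕ} {t r : ℝ}

lemma gaussianDensity_nonneg (ht : 0 ≤ t) (r : ℝ) : 0 ≤ gaussianDensity d t r := by
  unfold gaussianDensity; positivity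

lemma gaussianDensity_le_gaussianDensity (ht : 0 ≤ t) {r' : ℝ} (hr : 0 ≤ r) (hrr' : r ≤ r') :
    gaussianDensity d t r' ≤ gaussianDensity d t r := by
  unfold gaussianDensity
  gcongr

lemma gaussianDensity_le_mul_gaussianDensity_two_mul (ht : 0 < t) {δ : ℝ} (hδ : 0 ≤ δ)
    (hδr : δ ≤ r) :
    gaussianDensity d t r ≤
      2 ^ ((d : ℝ) / 2) * exp (-δ ^ 2 / (4 * t)) * gaussianDensity d (2 * t) r := by
  have hsplit : gaussianDensity d t r =
      2 ^ ((d : ℝ) / 2) * exp (-r ^ 2 / (4 * t)) * gaussianDensity d (2 * t) r := by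
    unfold gaussianDensity
    rw [show 2 * π * (2 * t) = 2 * (2 * π * t) by ring,
      mul_rpow zero_le_two (by positivity), neg_div, rpow_neg zero_le_two,
      show -r ^ 2 / (2 * t) = -r ^ 2 / (4 * t) + -r ^ 2 / (2 * (2 * t)) by ring, exp_add]
    have h2 : (2 : ℝ) ^ ((d : ℝ) / 2) ≠ 0 := by positivity
    field_simp
  rw [hsplit]
  have hg₂ := gaussianDensity_nonneg (d := d) (by positivity : 0 ≤ 2 * t) r
  gcongr

lemma tendsto_sq_nhdsGT_zero : Tendsto (fun σ : ℝ => σ ^ 2) (𝓝[>] 0) (𝓝[>] 0) :=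
  tendsto_nhdsWithin_iff.2
    ⟨((continuous_pow 2).tendsto' 0 0 (zero_pow two_ne_zero)).mono_left nhdsWithin_le_nhds,
      eventually_nhdsWithin_of_forall fun _ hσ => mem_Ioi.2 (pow_pos hσ 2)⟩

lemma tendsto_exp_neg_div_nhdsGT_zero {c : ℝ} (hc : 0 < c) :
    Tendsto (fun t => exp (-c / t)) (𝓝[>] 0) (𝓝 0) := by
  have hlim : Tendsto (fun t => -c / t) (𝓝[>] 0) atBot := by
    simpa only [div_eq_mul_inv, neg_mul, Function.comp_def] using
      tendsto_neg_atTop_atBot.comp (tendsto_inv_nhdsGT_zero.const_mul_atTop hc)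
  exact tendsto_exp_atBot.comp hlim

lemma tendsto_gaussianDensity_nhdsGT_zero (d : ℕ) (hr : r ≠ 0) :
    Tendsto (fun t => gaussianDensity d t r) (𝓝[>] 0) (𝓝 0) := by
  have hlim := ((tendsto_rpow_mul_exp_neg_mul_atTop_nhds_zero ((d : ℝ) / 2) (r ^ 2 / 2)
    (by positivity)).comp tendsto_inv_nhdsGT_zero).const_mul ((2 * π) ^ (-(d : ℝ) / 2))
  rw [mul_zero] at hlim
  refine hlim.congr' (eventually_nhdsWithin_of_forall fun t (ht : 0 < t) => ?_)
  simp only [Function.comp_apply, gaussianDensity]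
  rw [mul_rpow (by positivity) ht.le, neg_div,
    rpow_neg ht.le, ← inv_rpow ht.le]
  ring_nf

variable {V : Type*} [NormedAddCommGroup V] [InnerProductSpace ℝ V] [FiniteDimensional ℝ V]
  [MeasurableSpace V] [BorelSpace V]

lemma integral_gaussianDensity (ht : 0 < t) :
    ∫ v : V, gaussianDensity (Module.finrank ℝ V) t ‖v‖ = 1 := by
  have hexp : ∀ v : V, exp (-‖v‖ ^ 2 / (2 * t)) = exp (-(2 * t)⁻¹ * ‖v‖ ^ 2) := fun v => by
    ring_nf
  simp only [gaussianDensity, hexp]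
  rw [integral_const_mul, GaussianFourier.integral_rexp_neg_mul_sq_norm (by positivity),
    div_inv_eq_mul, show π * (2 * t) = 2 * π * t by ring, neg_div, rpow_neg (by positivity),
    inv_mul_cancel₀ (by positivity)]

lemma integrable_gaussianDensity (ht : 0 < t) :
    Integrable fun v : V => gaussianDensity (Module.finrank ℝ V) t ‖v‖ :=
  Integrable.of_integral_ne_zero (by rw [integral_gaussianDensity ht]; exact one_ne_zero)

end GaussianDensity

lemma abs_sub_mul_gaussianDensity_le {d : ℕ} {a b t δ η r : ℝ} (ht : 0 < t) (hδ : 0 < δ)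
    (hη : 0 ≤ η) (hclose : r < δ → |a - b| ≤ η) :
    |a - b| * gaussianDensity d t r ≤ η * gaussianDensity d t r + gaussianDensity d t δ * |a| +
      |b| * (2 ^ ((d : ℝ) / 2) * exp (-δ ^ 2 / (4 * t))) * gaussianDensity d (2 * t) r := by
  have hg := gaussianDensity_nonneg (d := d) ht.le r
  have hgδ := gaussianDensity_nonneg (d := d) ht.le δ
  have hg₂ := gaussianDensity_nonneg (d := d) (by positivity : 0 ≤ 2 * t) r
  have htail : 0 ≤ |b| * (2 ^ ((d : ℝ) / 2) * exp (-δ ^ 2 / (4 * t))) := by positivity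
  rcases lt_or_ge r δ with hrδ | hδr
  · nlinarith [mul_le_mul_of_nonneg_right (hclose hrδ) hg, mul_nonneg hgδ (abs_nonneg a)]
  · calc |a - b| * gaussianDensity d t r
          ≤ |a| * gaussianDensity d t r + |b| * gaussianDensity d t r := by
            rw [← add_mul]; gcongr; exact abs_sub _ _
      _ ≤ gaussianDensity d t δ * |a| +
            |b| * (2 ^ ((d : ℝ) / 2) * exp (-δ ^ 2 / (4 * t)) * gaussianDensity d (2 * t) r) := by
            rw [mul_comm |a|]
            gcongr
            · exact gaussianDensity_le_gaussianDensity ht.le hδ.le hδr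
            · exact gaussianDensity_le_mul_gaussianDensity_two_mul ht hδ.le hδr
      _ ≤ _ := by nlinarith [mul_nonneg hη hg]

section Smoothing

variable {d : ℕ} {p : Euc d → ℝ}

lemma smoothed_eq_integral (p : Euc d → ℝ) (σ : ℝ) (z : Euc d) :
    smoothed d p σ z = ∫ x, p x * gaussianDensity d (σ ^ 2) ‖z - x‖ := by
  rw [smoothed, ← integral_const_mul]
  congr 1 with x
  rw [gaussianDensity]
  ring

lemma integral_gaussianDensity_norm_sub {t : ℝ} (ht : 0 < t) (z : Euc d) :
    ∫ x, gaussianDensity d t ‖z - x‖ = 1 := by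
  rw [integral_sub_left_eq_self (fun v : Euc d => gaussianDensity d t ‖v‖)]
  simpa using integral_gaussianDensity (V := Euc d) ht

lemma integrable_gaussianDensity_norm_sub {t : ℝ} (ht : 0 < t) (z : Euc d) :
    Integrable fun x => gaussianDensity d t ‖z - x‖ :=
  (by simpa using integrable_gaussianDensity (V := Euc d) ht : Integrable _).comp_sub_left z

lemma abs_smoothed_sub_le (hp : Integrable p) {σ δ η : ℝ} (hσ : σ ≠ 0) (hδ : 0 < δ)
    {z : Euc d} (hη : ∀ x, ‖z - x‖ < δ → |p x - p z| ≤ η) :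
    |smoothed d p σ z - p z| ≤ η + gaussianDensity d (σ ^ 2) δ * (∫ x, |p x|) +
      |p z| * (2 ^ ((d : ℝ) / 2) * exp (-δ ^ 2 / (4 * σ ^ 2))) := by
  set t := σ ^ 2
  have ht : 0 < t := by positivity
  set C := 2 ^ ((d : ℝ) / 2) * exp (-δ ^ 2 / (4 * t))
  set g := fun x => gaussianDensity d t ‖z - x‖
  set g₂ := fun x => gaussianDensity d (2 * t) ‖z - x‖
  have hg := integrable_gaussianDensity_norm_sub ht z
  have hg₂ := integrable_gaussianDensity_norm_sub (by positivity : 0 < 2 * t) z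
  have hpg : Integrable fun x => p x * g x :=
    hp.mul_bdd hg.aestronglyMeasurable (ae_of_all _ fun x => by
      rw [norm_of_nonneg (gaussianDensity_nonneg ht.le _)]
      exact gaussianDensity_le_gaussianDensity ht.le le_rfl (norm_nonneg _))
  have hsum : Integrable fun x => η * g x + gaussianDensity d t δ * |p x| :=
    (hg.const_mul _).add (hp.abs.const_mul _)
  have hbound : ∀ x, |(p x - p z) * g x| ≤
      η * g x + gaussianDensity d t δ * |p x| + |p z| * C * g₂ x := fun x => by
    rw [abs_mul, abs_of_nonneg (gaussianDensity_nonneg ht.le _)]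
    exact abs_sub_mul_gaussianDensity_le ht hδ ((abs_nonneg _).trans (hη z (by simpa using hδ)))
      (hη x)
  calc |smoothed d p σ z - p z| = |∫ x, (p x - p z) * g x| := by
        rw [smoothed_eq_integral]
        simp_rw [sub_mul]
        rw [integral_sub hpg (hg.const_mul _), integral_const_mul,
          integral_gaussianDensity_norm_sub ht, mul_one]
    _ ≤ ∫ x, |(p x - p z) * g x| := abs_integral_le_integral_abs
    _ ≤ ∫ x, (η * g x + gaussianDensity d t δ * |p x| + |p z| * C * g₂ x) :=
        integral_mono_of_nonneg (ae_of_all _ fun _ => abs_nonneg _)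
          (hsum.add (hg₂.const_mul _))
          (ae_of_all _ hbound)
    _ = η + gaussianDensity d t δ * (∫ x, |p x|) + |p z| * C := by
        rw [integral_add hsum (hg₂.const_mul _),
          integral_add (hg.const_mul _) (hp.abs.const_mul _), integral_const_mul,
          integral_const_mul, integral_const_mul, integral_gaussianDensity_norm_sub ht,
          integral_gaussianDensity_norm_sub (by positivity), mul_one, mul_one]

theorem tendstoUniformlyOn_smoothed (hc : Continuous p) (hi : Integrable p) {K : Set (Euc d)}
    (hK : IsCompact K) : TendstoUniformlyOn (fun σ => smoothed d p σ) p (𝓝[>] 0) K := by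
  rw [Metric.tendstoUniformlyOn_iff]
  intro ε hε
  obtain ⟨δ₀, hδ₀, hucont⟩ := Metric.uniformContinuousOn_iff.mp
    ((hK.cthickening (r := 1)).uniformContinuousOn_of_continuous hc.continuousOn) (ε / 2)
    (half_pos hε)
  set δ := min δ₀ 1
  have hδ : 0 < δ := lt_min hδ₀ one_pos
  have hη : ∀ z ∈ K, ∀ x, ‖z - x‖ < δ → |p x - p z| ≤ ε / 2 := by
    intro z hz x hx
    rw [← dist_eq_norm'] at hx
    have hxK : x ∈ Metric.cthickening 1 K :=
      Metric.mem_cthickening_of_dist_le x z 1 K hz (hx.le.trans (min_le_right _ _))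
    exact (hucont x hxK z (Metric.self_subset_cthickening K hz)
      (hx.trans_le (min_le_left _ _))).le
  obtain ⟨C, hC⟩ := hK.exists_bound_of_continuousOn hc.continuousOn
  have herr : Tendsto (fun σ => gaussianDensity d (σ ^ 2) δ * (∫ x, |p x|) +
      C * (2 ^ ((d : ℝ) / 2) * exp (-δ ^ 2 / (4 * σ ^ 2)))) (𝓝[>] 0) (𝓝 0) := by
    have hexp : Tendsto (fun σ : ℝ => exp (-δ ^ 2 / (4 * σ ^ 2))) (𝓝[>] 0) (𝓝 0) :=
      ((tendsto_exp_neg_div_nhdsGT_zero (c := δ ^ 2 / 4) (by positivity)).comp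
        tendsto_sq_nhdsGT_zero).congr fun σ => by simp only [Function.comp_apply]; ring_nf
    simpa using (((tendsto_gaussianDensity_nhdsGT_zero d hδ.ne').comp
      tendsto_sq_nhdsGT_zero).mul_const _).add ((hexp.const_mul _).const_mul C)
  filter_upwards [herr.eventually_lt_const (half_pos hε), self_mem_nhdsWithin]
    with σ hσerr hσ z hz
  rw [dist_comm, Real.dist_eq]
  calc |smoothed d p σ z - p z|
      ≤ ε / 2 + gaussianDensity d (σ ^ 2) δ * (∫ x, |p x|) +
          |p z| * (2 ^ ((d : ℝ) / 2) * exp (-δ ^ 2 / (4 * σ ^ 2))) :=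
        abs_smoothed_sub_le hi (ne_of_gt hσ) hδ (hη z hz)
    _ ≤ ε / 2 + (gaussianDensity d (σ ^ 2) δ * (∫ x, |p x|) +
          C * (2 ^ ((d : ℝ) / 2) * exp (-δ ^ 2 / (4 * σ ^ 2)))) := by
        rw [← add_assoc]
        gcongr
        exact hC z hz
    _ < ε := by linarith

end Smoothing

lemma lipschitzOnWith_log_Ici {m : ℝ} (hm : 0 < m) :
    LipschitzOnWith (Real.toNNReal m⁻¹) log (Ici m) := by
  have key : ∀ a ∈ Ici m, ∀ b ∈ Ici m, log a - log b ≤ m⁻¹ * |a - b| := by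
    intro a ha b hb
    have ha₀ : 0 < a := hm.trans_le ha
    have hb₀ : 0 < b := hm.trans_le hb
    calc log a - log b = log (a / b) := (log_div ha₀.ne' hb₀.ne').symm
      _ ≤ a / b - 1 := log_le_sub_one_of_pos (div_pos ha₀ hb₀)
      _ = (a - b) / b := by field_simp
      _ ≤ |a - b| / m := div_le_div₀ (abs_nonneg _) (le_abs_self _) hm hb
      _ = m⁻¹ * |a - b| := by ring
  refine LipschitzOnWith.of_dist_le_mul fun a ha b hb => ?_
  rw [Real.dist_eq, Real.dist_eq, Real.coe_toNNReal _ (inv_nonneg.2 hm.le), abs_sub_le_iff]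
  exact ⟨key a ha b hb, abs_sub_comm a b ▸ key b hb a ha⟩

lemma TendstoUniformlyOn.log {ι α : Type*} {F : ι → α → ℝ} {f : α → ℝ} {l : Filter ι}
    {K : Set α} {m : ℝ} (hm : 0 < m) (hf : ∀ x ∈ K, m ≤ f x)
    (h : TendstoUniformlyOn F f l K) :
    TendstoUniformlyOn (fun i x => log (F i x)) (fun x => log (f x)) l K := by
  have hF : ∀ᶠ i in l, ∀ x ∈ K, F i x ∈ Ici (m / 2) := by
    filter_upwards [Metric.tendstoUniformlyOn_iff.mp h (m / 2) (half_pos hm)] with i hi x hx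
    have hclose := (abs_lt.mp (hi x hx)).2
    have hlow := hf x hx
    rw [mem_Ici]
    linarith
  exact (lipschitzOnWith_log_Ici (half_pos hm)).uniformContinuousOn
    |>.comp_tendstoUniformlyOn_eventually hF (fun x hx => (half_le_self hm.le).trans (hf x hx)) h

theorem log_smoothed_tendsto_uniformly_on_compacts_general
    (d : ℕ) (p : Euc d → ℝ)
    (hint : (∫ x : Euc d, p x) = 1)
    (hlogconcave : ConcaveOn ℝ Set.univ (fun x => Real.log (p x)))
    (hpos : ∀ x, 0 < p x) :
    ∀ K : Set (Euc d), IsCompact K →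
      TendstoUniformlyOn (fun σ x => Real.log (smoothed d p σ x))
        (fun x => Real.log (p x)) (nhdsWithin (0 : ℝ) (Set.Ioi 0)) K := by
  intro K hK
  have hp : Integrable p := Integrable.of_integral_ne_zero (by rw [hint]; exact one_ne_zero)
  have hc : Continuous p :=
    (continuous_exp.comp (continuousOn_univ.mp (hlogconcave.continuousOn isOpen_univ))).congr
      fun x => exp_log (hpos x)
  obtain ⟨m, hm, hmK⟩ := hK.exists_forall_le' hc.continuousOn fun x _ => hpos x
  exact (tendstoUniformlyOn_smoothed hc hp hK).log hm hmK

/-- For a log-concave strictly positive density `p`, the smoothed log-density `ln p_σ`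
converges to `ln p` uniformly on every compact set as `σ → 0⁺`. -/
theorem log_smoothed_tendsto_uniformly_on_compacts
    (d : ℕ) (p : Euc d → ℝ)
    (hmeas : Measurable p) (hnonneg : ∀ x, 0 ≤ p x)
    (hint : (∫ x : Euc d, p x) = 1)
    (hlogconcave : ConcaveOn ℝ Set.univ (fun x => Real.log (p x)))
    (hpos : ∀ x, 0 < p x) :
    ∀ K : Set (Euc d), IsCompact K →
      TendstoUniformlyOn (fun σ x => Real.log (smoothed d p σ x))
        (fun x => Real.log (p x)) (nhdsWithin (0 : ℝ) (Set.Ioi 0)) K :=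
  log_smoothed_tendsto_uniformly_on_compacts_general d p hint hlogconcave hpos

end
end
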